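/- Let n ≥ 1, let g ≥ 4 be even, and let i be even with 1 ≤ i ≤ 2n − g. Then the number of integers m ∈ {1, …, a(2n+1) − 1} whose Kentucky-2 legal decomposition contains both a(i) and a(i+g) as summands with no summand a(j) for i < j < i+g equals (1/9)·(2^{i/2} + (−1)^{(i−2)/2})·(2^{(2n−i−g)/2 + 1} + (−1)^{(2n−i−g)/2}). -/

import Mathlib

open scoped Classical

/-- The Kentucky-2 sequence: `a 1 = 1`, `a 2 = 2`, `a 3 = 3`, `a 4 = 4`, and
`a (n+4) = a (n+2) + 2 * a n` for all `n ≥ 1`. -/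
def kent : ℕ → ℕ
  | 0 => 0
  | 1 => 1
  | 2 => 2
  | 3 => 3
  | 4 => 4
  | n + 5 => kent (n + 3) + 2 * kent (n + 1)

/-- A finite set `S` of positive integers is Kentucky-2 legal if for all distinct
`i, j ∈ S` we have `|⌈i/2⌉ - ⌈j/2⌉| ≥ 2`. -/
def KLegal (S : Finset ℕ) : Prop :=
  (∀ i ∈ S, 1 ≤ i) ∧
  ∀ i ∈ S, ∀ j ∈ S, i ≠ j → 2 ≤ |(((i + 1) / 2 : ℕ) : ℤ) - (((j + 1) / 2 : ℕ) : ℤ)|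

/-- `decomp m` is the (unique) Kentucky-2 legal set of summand indices of `m`. -/
noncomputable def decomp (m : ℕ) : Finset ℕ :=
  if h : ∃ S : Finset ℕ, KLegal S ∧ ∑ i ∈ S, kent i = m then h.choose else ∅

/-- Jacobsthal-like sequence. -/
def jac : ℕ → ℕ
  | 0 => 1
  | 1 => 3
  | n + 2 => jac (n + 1) + 2 * jac n

lemma jac_sum (n : ℕ) : jac n + jac (n + 1) = 2 ^ (n + 2) := by
  induction n with
  | zero => rfl
  | succ k ih =>
    have : jac (k + 2) = jac (k + 1) + 2 * jac k := rfl
    rw [this]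
    rw [pow_succ]
    omega

lemma jac_add2 (n : ℕ) : jac (n + 2) = 2 ^ (n + 2) + jac n := by
  have h1 := jac_sum n
  have h2 : jac (n + 2) = jac (n + 1) + 2 * jac n := rfl
  omega

lemma jac_bounds (n : ℕ) : 2 ^ n ≤ jac n ∧ jac n < 2 ^ (n + 1) := by
  induction n with
  | zero => exact ⟨le_refl 1, one_lt_two⟩
  | succ k ih =>
    have h1 := jac_sum k
    have h2 : (2:ℕ) ^ (k + 2) = 2 * 2 ^ (k + 1) := (pow_succ' 2 (k+1))
    have h3 : (2:ℕ) ^ (k + 1) = 2 * 2 ^ k := (pow_succ' 2 k)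
    omega

lemma kent_odd : ∀ m : ℕ, kent (2 * m + 1) = jac m
  | 0 => rfl
  | 1 => rfl
  | m + 2 => by
    have h1 := kent_odd m
    have h2 := kent_odd (m + 1)
    have e : 2 * (m + 2) + 1 = (2 * m) + 5 := by ring
    rw [e]
    show kent (2*m+3) + 2 * kent (2*m+1) = jac (m+2)
    have e2 : 2 * m + 3 = 2 * (m+1) + 1 := by ring
    rw [e2, h1, h2]
    rfl

lemma kent_even : ∀ m : ℕ, kent (2 * m + 2) = 2 ^ (m + 1)
  | 0 => rfl
  | 1 => rfl
  | m + 2 => by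
    have h1 := kent_even m
    have h2 := kent_even (m + 1)
    have e : 2 * (m + 2) + 2 = (2 * m + 1) + 5 := by ring
    rw [e]
    show kent (2*m+4) + 2 * kent (2*m+2) = 2 ^ (m+3)
    have e2 : 2 * m + 4 = 2 * (m+1) + 2 := by ring
    rw [e2, h1, h2]
    ring

lemma kent_le_succ (n : ℕ) : kent n ≤ kent (n + 1) := by
  rcases Nat.even_or_odd n with ⟨m, hm⟩ | ⟨m, hm⟩
  · subst hm
    rcases m with _ | m
    · simp [kent]
    · have e0 : m + 1 + (m + 1) = 2 * m + 2 := by ring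
      have e1 : 2 * m + 2 + 1 = 2 * (m + 1) + 1 := by ring
      rw [e0, e1, kent_even, kent_odd]
      have := (jac_bounds (m+1)).1
      omega
  · subst hm
    have e0 : 2 * m + 1 = 2 * m + 1 := rfl
    have e1 : 2 * m + 1 + 1 = 2 * m + 2 := by ring
    rw [e1, kent_odd, kent_even]
    exact le_of_lt (jac_bounds m).2

lemma kent_mono : Monotone kent := monotone_nat_of_le_succ kent_le_succ

lemma kent_pos {n : ℕ} (h : 1 ≤ n) : 1 ≤ kent n := by
  have : kent 1 ≤ kent n := kent_mono h
  simpa [kent] using this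

lemma two_le_abs_iff (a b : ℕ) : 2 ≤ |((a:ℤ)) - (b:ℤ)| ↔ a + 2 ≤ b ∨ b + 2 ≤ a := by
  rw [le_abs]
  omega

lemma KLegal_iff (S : Finset ℕ) : KLegal S ↔
    (∀ i ∈ S, 1 ≤ i) ∧
    ∀ i ∈ S, ∀ j ∈ S, i ≠ j →
      ((i + 1) / 2 + 2 ≤ (j + 1) / 2 ∨ (j + 1) / 2 + 2 ≤ (i + 1) / 2) := by
  unfold KLegal
  refine and_congr Iff.rfl ?_
  constructor
  · intro h x hx y hy hxy
    exact (two_le_abs_iff _ _).1 (h x hx y hy hxy)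
  · intro h x hx y hy hxy
    exact (two_le_abs_iff _ _).2 (h x hx y hy hxy)

lemma KLegal.mono {S T : Finset ℕ} (hT : T ⊆ S) (hS : KLegal S) : KLegal T :=
  ⟨fun x hx => hS.1 x (hT hx), fun x hx y hy hxy => hS.2 x (hT hx) y (hT hy) hxy⟩

lemma KLegal_empty : KLegal (∅ : Finset ℕ) := by
  constructor <;> intro x hx <;> simp at hx

/-- Key bound: a legal set with all indices `≤ k` has summand total `< kent (k+1)`. -/
lemma sum_lt_kent : ∀ k : ℕ, ∀ S : Finset ℕ, KLegal S → (∀ j ∈ S, j ≤ k) →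
    ∑ x ∈ S, kent x < kent (k + 1) := by
  intro k
  induction k using Nat.strong_induction_on with
  | _ k IH =>
    intro S hS hbd
    rcases S.eq_empty_or_nonempty with rfl | hne
    · simpa [Nat.pos_iff_ne_zero, Nat.one_le_iff_ne_zero] using kent_pos (Nat.le_add_left 1 k)
    · set s := S.max' hne with hsdef
      have hsS : s ∈ S := S.max'_mem hne
      have hsle : ∀ j ∈ S, j ≤ s := fun j hj => S.le_max' j hj
      have hs1 : 1 ≤ s := hS.1 s hsS
      have hsk : s ≤ k := hbd s hsS
      have hsum : ∑ x ∈ S, kent x = kent s + ∑ x ∈ S.erase s, kent x :=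
        (Finset.add_sum_erase S kent hsS).symm
      have hrest_legal : KLegal (S.erase s) := KLegal.mono (Finset.erase_subset _ _) hS
      have hclass : ∀ j ∈ S.erase s, (j + 1) / 2 + 2 ≤ (s + 1) / 2 := by
        intro j hj
        have hjS := Finset.mem_of_mem_erase hj
        have hjne := Finset.ne_of_mem_erase hj
        have := (KLegal_iff S).1 hS |>.2 j hjS s hsS hjne
        have hjs : j ≤ s := hsle j hjS
        omega
      by_cases hs4 : s ≤ 4
      · -- rest is empty
        have hrest : S.erase s = ∅ := by
          rw [Finset.eq_empty_iff_forall_notMem]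
          intro j hj
          have h1 := hclass j hj
          have h2 := hS.1 j (Finset.mem_of_mem_erase hj)
          omega
        rw [hsum, hrest]
        simp only [Finset.sum_empty, add_zero]
        have h1 : kent s < kent (s + 1) := by
          interval_cases s <;> simp [kent]
        exact lt_of_lt_of_le h1 (kent_mono (by omega))
      · -- s ≥ 5
        push_neg at hs4
        have hrest_bd : ∀ j ∈ S.erase s, j ≤ 2 * ((s - 3) / 2) := by
          intro j hj
          have h1 := hclass j hj
          omega
        have hIH := IH (2 * ((s - 3) / 2)) (by omega) (S.erase s) hrest_legal hrest_bd
        set m := (s - 3) / 2 with hm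
        -- s = 2m+3 (odd) or s = 2m+4 (even)
        rcases Nat.even_or_odd s with ⟨u, hu⟩ | ⟨u, hu⟩
        · -- s even, s = 2m+4, u = m+2
          have hsu : s = 2 * m + 4 := by omega
          have key : kent s + kent (2 * m + 1) ≤ kent (s + 1) := by
            rw [hsu]
            have e2 : 2 * m + 4 + 1 = 2 * m + 5 := by omega
            rw [e2]
            have a1 : kent (2 * m + 4) = 2 ^ (m + 2) := by
              have e : 2 * (m + 1) + 2 = 2 * m + 4 := by ring
              rw [← e]; exact kent_even (m + 1)
            have a2 : kent (2 * m + 1) = jac m := kent_odd m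
            have a3 : kent (2 * m + 5) = jac (m + 2) := by
              have e : 2 * (m + 2) + 1 = 2 * m + 5 := by ring
              rw [← e]; exact kent_odd (m + 2)
            have a4 := jac_add2 m
            rw [a1, a2, a3]
            omega
          calc ∑ x ∈ S, kent x = kent s + ∑ x ∈ S.erase s, kent x := hsum
            _ < kent s + kent (2 * m + 1) := by omega
            _ ≤ kent (s + 1) := key
            _ ≤ kent (k + 1) := kent_mono (by omega)
        · -- s odd, s = 2m+3
          have hsu : s = 2 * m + 3 := by omega
          have key : kent s + kent (2 * m + 1) ≤ kent (s + 1) := by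
            rw [hsu]
            have e2 : 2 * m + 3 + 1 = 2 * m + 4 := by omega
            rw [e2]
            have a1 : kent (2 * m + 3) = jac (m + 1) := by
              have e : 2 * (m + 1) + 1 = 2 * m + 3 := by ring
              rw [← e]; exact kent_odd (m + 1)
            have a2 : kent (2 * m + 1) = jac m := kent_odd m
            have a3 : kent (2 * m + 4) = 2 ^ (m + 2) := by
              have e : 2 * (m + 1) + 2 = 2 * m + 4 := by ring
              rw [← e]; exact kent_even (m + 1)
            have a4 := jac_sum m
            rw [a1, a2, a3]
            omega
          calc ∑ x ∈ S, kent x = kent s + ∑ x ∈ S.erase s, kent x := hsum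
            _ < kent s + kent (2 * m + 1) := by omega
            _ ≤ kent (s + 1) := key
            _ ≤ kent (k + 1) := kent_mono (by omega)

/-- Uniqueness of legal decompositions. -/
lemma legal_sum_unique : ∀ N : ℕ, ∀ S T : Finset ℕ, KLegal S → KLegal T →
    ∑ x ∈ S, kent x = N → ∑ x ∈ T, kent x = N → S = T := by
  intro N
  induction N using Nat.strong_induction_on with
  | _ N IH =>
    intro S T hS hT hSN hTN
    have hzero : ∀ U : Finset ℕ, KLegal U → U.Nonempty → 1 ≤ ∑ x ∈ U, kent x := by
      intro U hU ⟨u, hu⟩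
      calc 1 ≤ kent u := kent_pos (hU.1 u hu)
        _ ≤ ∑ x ∈ U, kent x := Finset.single_le_sum (fun x _ => Nat.zero_le _) hu
    rcases S.eq_empty_or_nonempty with rfl | hSne
    · rcases T.eq_empty_or_nonempty with rfl | hTne
      · rfl
      · exfalso; have := hzero T hT hTne; simp at hSN; omega
    · rcases T.eq_empty_or_nonempty with rfl | hTne
      · exfalso; have := hzero S hS hSne; simp at hTN; omega
      · set s := S.max' hSne with hs
        set t := T.max' hTne with ht
        have hsS : s ∈ S := S.max'_mem hSne
        have htT : t ∈ T := T.max'_mem hTne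
        have hkey : ∀ U V : Finset ℕ, ∀ hU : U.Nonempty, ∀ hV : V.Nonempty,
            KLegal U → KLegal V → ∑ x ∈ U, kent x = N → ∑ x ∈ V, kent x = N →
            U.max' hU < V.max' hV → False := by
          intro U V hU hV hUl hVl hUN hVN hlt
          have h1 : ∑ x ∈ U, kent x < kent (U.max' hU + 1) :=
            sum_lt_kent (U.max' hU) U hUl (fun j hj => U.le_max' j hj)
          have h2 : kent (U.max' hU + 1) ≤ kent (V.max' hV) := kent_mono (by omega)
          have h3 : kent (V.max' hV) ≤ ∑ x ∈ V, kent x :=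
            Finset.single_le_sum (fun x _ => Nat.zero_le _) (V.max'_mem hV)
          omega
        have hst : s = t := by
          rcases lt_trichotomy s t with h | h | h
          · exact absurd h (fun h => hkey S T hSne hTne hS hT hSN hTN h)
          · exact h
          · exact absurd h (fun h => hkey T S hTne hSne hT hS hTN hSN h)
        have hks : 1 ≤ kent s := kent_pos (hS.1 s hsS)
        have hsumS : ∑ x ∈ S, kent x = kent s + ∑ x ∈ S.erase s, kent x :=
          (Finset.add_sum_erase S kent hsS).symm
        have hsumT : ∑ x ∈ T, kent x = kent s + ∑ x ∈ T.erase s, kent x := by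
          rw [hst] at *
          exact (Finset.add_sum_erase T kent htT).symm
        have hNle : kent s ≤ N := by omega
        have hIH := IH (N - kent s) (by omega) (S.erase s) (T.erase s)
          (KLegal.mono (Finset.erase_subset _ _) hS)
          (KLegal.mono (Finset.erase_subset _ _) hT)
          (by omega) (by omega)
        have : S = insert s (S.erase s) := (Finset.insert_erase hsS).symm
        rw [this, hIH]
        rw [hst]
        exact Finset.insert_erase htT

lemma decomp_eq {S : Finset ℕ} {m : ℕ} (hS : KLegal S) (hsum : ∑ x ∈ S, kent x = m) :
    decomp m = S := by
  have hex : ∃ U : Finset ℕ, KLegal U ∧ ∑ x ∈ U, kent x = m := ⟨S, hS, hsum⟩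
  rw [decomp, dif_pos hex]
  exact legal_sum_unique m _ S hex.choose_spec.1 hS hex.choose_spec.2 hsum

lemma decomp_spec {m j : ℕ} (hj : j ∈ decomp m) :
    KLegal (decomp m) ∧ ∑ x ∈ decomp m, kent x = m := by
  by_cases hex : ∃ U : Finset ℕ, KLegal U ∧ ∑ x ∈ U, kent x = m
  · rw [decomp, dif_pos hex]
    exact hex.choose_spec
  · rw [decomp, dif_neg hex] at hj
    simp at hj

lemma KLegal_singleton {a : ℕ} (ha : 1 ≤ a) : KLegal ({a} : Finset ℕ) := by
  constructor
  · intro x hx; simp at hx; omega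
  · intro x hx y hy hxy; simp at hx hy; omega

lemma KLegal_insert_top {R : Finset ℕ} (hR : KLegal R) {u b : ℕ} (hb : ∀ x ∈ R, x ≤ b)
    (hu1 : 1 ≤ u) (hcl : (b + 1) / 2 + 2 ≤ (u + 1) / 2) : KLegal (insert u R) := by
  rw [KLegal_iff] at hR ⊢
  constructor
  · intro x hx
    rcases Finset.mem_insert.1 hx with rfl | hx
    · exact hu1
    · exact hR.1 x hx
  · intro x hx y hy hxy
    rcases Finset.mem_insert.1 hx with rfl | hx' <;>
      rcases Finset.mem_insert.1 hy with rfl | hy'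
    · omega
    · have h1 := hb y hy'
      have h2 : (y + 1) / 2 ≤ (b + 1) / 2 := Nat.div_le_div_right (by omega)
      omega
    · have h1 := hb x hx'
      have h2 : (x + 1) / 2 ≤ (b + 1) / 2 := Nat.div_le_div_right (by omega)
      omega
    · exact hR.2 x hx' y hy' hxy

lemma legal_count : ∀ c t : ℕ,
    ((Finset.Icc (2*t+1) (2*t+2*c)).powerset.filter KLegal).card = jac c
  | 0, t => by
    have h0 : Finset.Icc (2*t+1) (2*t+2*0) = ∅ := Finset.Icc_eq_empty (by omega)
    rw [h0, Finset.powerset_empty]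
    rw [Finset.filter_eq_self.2 (by intro S hS; simp at hS; rw [hS]; exact KLegal_empty)]
    rfl
  | 1, t => by
    have hIcc : Finset.Icc (2*t+1) (2*t+2*1) = {2*t+1, 2*t+2} := by
      ext x; simp only [Finset.mem_Icc, Finset.mem_insert, Finset.mem_singleton]; omega
    rw [hIcc]
    have hset : ({2*t+1, 2*t+2} : Finset ℕ).powerset.filter KLegal
        = {∅, {2*t+1}, {2*t+2}} := by
      ext S
      simp only [Finset.mem_filter, Finset.mem_powerset, Finset.mem_insert,
        Finset.mem_singleton]
      constructor
      · rintro ⟨hsub, hleg⟩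
        by_cases ha : (2*t+1) ∈ S <;> by_cases hb : (2*t+2) ∈ S
        · exfalso
          have := (KLegal_iff S).1 hleg |>.2 (2*t+1) ha (2*t+2) hb (by omega)
          omega
        · right; left
          apply Finset.Subset.antisymm
          · intro x hx
            have := hsub hx
            simp only [Finset.mem_insert, Finset.mem_singleton] at this ⊢
            rcases this with rfl | rfl
            · rfl
            · exact absurd hx hb
          · simpa using ha
        · right; right
          apply Finset.Subset.antisymm
          · intro x hx
            have := hsub hx
            simp only [Finset.mem_insert, Finset.mem_singleton] at this ⊢
            rcases this with rfl | rfl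
            · exact absurd hx ha
            · rfl
          · simpa using hb
        · left
          rw [Finset.eq_empty_iff_forall_notMem]
          intro x hx
          have := hsub hx
          simp only [Finset.mem_insert, Finset.mem_singleton] at this
          rcases this with rfl | rfl
          · exact ha hx
          · exact hb hx
      · rintro (rfl | rfl | rfl)
        · exact ⟨Finset.empty_subset _, KLegal_empty⟩
        · exact ⟨by intro x hx; simp at hx; simp [hx], KLegal_singleton (by omega)⟩
        · exact ⟨by intro x hx; simp at hx; simp [hx], KLegal_singleton (by omega)⟩
    rw [hset]
    rw [Finset.card_insert_of_notMem (by
        simp only [Finset.mem_insert, Finset.mem_singleton]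
        push_neg
        constructor <;> exact fun h => by
          have := Finset.singleton_ne_empty _ h.symm; exact this.elim)]
    · rw [Finset.card_insert_of_notMem (by
          simp only [Finset.mem_singleton]
          intro h
          have := Finset.singleton_injective h
          omega)]
      rfl
  | c+2, t => by
    have ih1 := legal_count (c+1) t
    have ih0 := legal_count c t
    have he : 2*t+2*(c+2) = 2*t+2*c+4 := by ring
    rw [he]
    set u := 2*t+2*c+4 with hu
    set v := 2*t+2*c+3 with hv
    set F := (Finset.Icc (2*t+1) (2*t+2*c+4)).powerset.filter KLegal with hF
    -- split on u
    have hsplit1 : (F.filter (fun S => u ∈ S)).card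
        + (F.filter (fun S => ¬ u ∈ S)).card = F.card :=
      Finset.card_filter_add_card_filter_not _
    have hsplit2 : ((F.filter (fun S => ¬ u ∈ S)).filter (fun S => v ∈ S)).card
        + ((F.filter (fun S => ¬ u ∈ S)).filter (fun S => ¬ v ∈ S)).card
        = (F.filter (fun S => ¬ u ∈ S)).card :=
      Finset.card_filter_add_card_filter_not _
    -- neither: equals the (c+1) counting set
    have hnone : (F.filter (fun S => ¬ u ∈ S)).filter (fun S => ¬ v ∈ S)
        = (Finset.Icc (2*t+1) (2*t+2*(c+1))).powerset.filter KLegal := by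
      ext S
      simp only [hF, Finset.filter_filter, Finset.mem_filter, Finset.mem_powerset]
      constructor
      · rintro ⟨hsub, ⟨hleg, hnu⟩, hnv⟩
        refine ⟨?_, hleg⟩
        intro x hx
        have h1 := hsub hx
        rw [Finset.mem_Icc] at h1 ⊢
        have h2 : x ≠ u := fun h => hnu (h ▸ hx)
        have h3 : x ≠ v := fun h => hnv (h ▸ hx)
        omega
      · rintro ⟨hsub, hleg⟩
        have hsub' : ∀ x ∈ S, 2*t+1 ≤ x ∧ x ≤ 2*t+2*(c+1) := by
          intro x hx; exact Finset.mem_Icc.1 (hsub hx)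
        refine ⟨?_, ⟨hleg, ?_⟩, ?_⟩
        · intro x hx
          have := hsub' x hx
          rw [Finset.mem_Icc]
          omega
        · intro hmem; have := hsub' u hmem; omega
        · intro hmem; have := hsub' v hmem; omega
    -- sets containing a top-class element w (u or v): card equals jac c
    have htop : ∀ w : ℕ, (w = u ∨ w = v) → ∀ F' : Finset (Finset ℕ),
        (∀ S, S ∈ F' ↔ (S ∈ F ∧ w ∈ S) ∧ (w = u ∨ u ∉ S)) →
        F'.card = jac c := by
      intro w hw F' hmemF'
      rw [← ih0]
      apply Finset.card_nbij' (i := fun S => S.erase w) (j := fun R => insert w R)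
      · intro S hS
        rw [Finset.mem_coe, hmemF'] at hS
        obtain ⟨⟨hSF, hwS⟩, -⟩ := hS
        rw [hF, Finset.mem_filter, Finset.mem_powerset] at hSF
        obtain ⟨hsub, hleg⟩ := hSF
        rw [Finset.mem_coe, Finset.mem_filter, Finset.mem_powerset]
        refine ⟨?_, KLegal.mono (Finset.erase_subset _ _) hleg⟩
        intro x hx
        have hxS := Finset.mem_of_mem_erase hx
        have hxne := Finset.ne_of_mem_erase hx
        have h1 := Finset.mem_Icc.1 (hsub hxS)
        have h2 := (KLegal_iff S).1 hleg |>.2 x hxS w hwS hxne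
        rw [Finset.mem_Icc]
        rcases hw with rfl | rfl <;> omega
      · intro R hR
        rw [Finset.mem_coe, Finset.mem_filter, Finset.mem_powerset] at hR
        obtain ⟨hsub, hleg⟩ := hR
        have hsub' : ∀ x ∈ R, 2*t+1 ≤ x ∧ x ≤ 2*t+2*c := by
          intro x hx; exact Finset.mem_Icc.1 (hsub hx)
        rw [Finset.mem_coe, hmemF']
        constructor
        · constructor
          · rw [hF, Finset.mem_filter, Finset.mem_powerset]
            constructor
            · intro x hx
              rcases Finset.mem_insert.1 hx with rfl | hx'
              · rw [Finset.mem_Icc]; rcases hw with rfl | rfl <;> omega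
              · have := hsub' x hx'; rw [Finset.mem_Icc]; omega
            · apply KLegal_insert_top hleg (b := 2*t+2*c) (fun x hx => (hsub' x hx).2)
              · rcases hw with rfl | rfl <;> omega
              · rcases hw with rfl | rfl <;> omega
          · exact Finset.mem_insert_self _ _
        · rcases hw with rfl | rfl
          · exact Or.inl rfl
          · refine Or.inr ?_
            intro hmem
            rcases Finset.mem_insert.1 hmem with h | h
            · omega
            · have := hsub' _ h; omega
      · intro S hS
        rw [Finset.mem_coe, hmemF'] at hS
        exact Finset.insert_erase hS.1.2
      · intro R hR
        rw [Finset.mem_coe, Finset.mem_filter, Finset.mem_powerset] at hR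
        apply Finset.erase_insert
        intro h
        have := Finset.mem_Icc.1 (hR.1 h)
        rcases hw with rfl | rfl <;> omega
    have hcard_u : (F.filter (fun S => u ∈ S)).card = jac c := by
      apply htop u (Or.inl rfl)
      intro S
      simp only [Finset.mem_filter]
      constructor
      · rintro ⟨h1, h2⟩; exact ⟨⟨h1, h2⟩, Or.inl (by trivial)⟩
      · rintro ⟨⟨h1, h2⟩, -⟩; exact ⟨h1, h2⟩
    have hcard_v : ((F.filter (fun S => ¬ u ∈ S)).filter (fun S => v ∈ S)).card = jac c := by
      apply htop v (Or.inr rfl)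
      intro S
      simp only [Finset.mem_filter]
      constructor
      · rintro ⟨⟨h1, h3⟩, h2⟩; exact ⟨⟨h1, h2⟩, Or.inr h3⟩
      · rintro ⟨⟨h1, h2⟩, h3 | h3⟩
        · exact absurd h3 (by omega)
        · exact ⟨⟨h1, h3⟩, h2⟩
    have hcard_n : ((F.filter (fun S => ¬ u ∈ S)).filter (fun S => ¬ v ∈ S)).card
        = jac (c+1) := by rw [hnone, ih1]
    show F.card = jac (c+2)
    have : jac (c+2) = jac (c+1) + 2 * jac c := rfl
    omega

lemma jacQ : ∀ c : ℕ, (jac c : ℚ) = (2 ^ (c + 2) + (-1) ^ (c + 1)) / 3 := by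
  intro c
  induction c with
  | zero => norm_num [jac]
  | succ d ih =>
    have h := jac_sum d
    have hq : (jac d : ℚ) + (jac (d + 1) : ℚ) = 2 ^ (d + 2) := by exact_mod_cast h
    rw [ih] at hq
    field_simp at hq ⊢
    ring_nf at hq ⊢
    linarith [hq]

lemma legal_glue (a b : ℕ) (ha1 : 1 ≤ a) (hb2 : 2 ≤ b) (T U : Finset ℕ)
    (hT : KLegal T) (hU : KLegal U) (hTb : ∀ x ∈ T, x ≤ 2*a - 4)
    (hUb : ∀ x ∈ U, 2*a + 2*b + 3 ≤ x) :
    KLegal (insert (2*a) (insert (2*a + 2*b) (T ∪ U))) := by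
  have fT : ∀ z ∈ T, 1 ≤ z ∧ z ≤ 2*a - 4 := fun z hz => ⟨hT.1 z hz, hTb z hz⟩
  have fU : ∀ z ∈ U, 1 ≤ z ∧ 2*a + 2*b + 3 ≤ z := fun z hz => ⟨hU.1 z hz, hUb z hz⟩
  rw [KLegal_iff] at hT hU ⊢
  constructor
  · intro x hx
    simp only [Finset.mem_insert, Finset.mem_union] at hx
    rcases hx with rfl | rfl | hx | hx
    · omega
    · omega
    · exact hT.1 x hx
    · exact hU.1 x hx
  · intro x hx y hy hxy
    simp only [Finset.mem_insert, Finset.mem_union] at hx hy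
    rcases hx with rfl | rfl | hx | hx <;> rcases hy with rfl | rfl | hy | hy
    · omega
    · omega
    · have := fT y hy; omega
    · have := fU y hy; omega
    · omega
    · omega
    · have := fT y hy; omega
    · have := fU y hy; omega
    · have := fT x hx; omega
    · have := fT x hx; omega
    · exact hT.2 x hx y hy hxy
    · have := fT x hx; have := fU y hy; omega
    · have := fU x hx; omega
    · have := fU x hx; omega
    · have := fU x hx; have := fT y hy; omega
    · exact hU.2 x hx y hy hxy

/-- For `n ≥ 1`, `g ≥ 4` even, and `i` even with `1 ≤ i ≤ 2n - g`, the number of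
`m ∈ {1,…, a (2n+1) - 1}` whose Kentucky-2 legal decomposition contains both `a i` and
`a (i+g)` with no summand strictly in between equals
`(1/9)(2^{i/2} + (-1)^{(i-2)/2})(2^{(2n-i-g)/2 + 1} + (-1)^{(2n-i-g)/2})`. -/
theorem kentucky_gap_count_even (n g i : ℕ) (hn : 1 ≤ n) (hg : Even g) (hg4 : 4 ≤ g)
    (hi : Even i) (hi1 : 1 ≤ i) (hig : i + g ≤ 2 * n) :
    (((Finset.Icc 1 (kent (2 * n + 1) - 1)).filter fun m =>
          i ∈ decomp m ∧ i + g ∈ decomp m ∧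
            ∀ j ∈ decomp m, ¬(i < j ∧ j < i + g)).card : ℚ) =
      (1 / 9) * (2 ^ (i / 2) + (-1) ^ ((i - 2) / 2)) *
        (2 ^ ((2 * n - i - g) / 2 + 1) + (-1) ^ ((2 * n - i - g) / 2)) := by
  obtain ⟨a, ha0⟩ := hi
  obtain ⟨b, hb0⟩ := hg
  have ha' : i = 2 * a := by omega
  have hb' : g = 2 * b := by omega
  have ha1 : 1 ≤ a := by omega
  have hb2 : 2 ≤ b := by omega
  set k := n - a - b with hkdef
  have hk' : 2 * n = i + g + 2 * k := by omega
  set I1 := Finset.Icc 1 (i - 4) with hI1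
  set I2 := Finset.Icc (i + g + 3) (2 * n) with hI2
  set P1 := I1.powerset.filter KLegal with hP1
  set P2 := I2.powerset.filter KLegal with hP2
  set Sf := (Finset.Icc 1 (2 * n)).powerset.filter
      (fun S => KLegal S ∧ i ∈ S ∧ i + g ∈ S ∧ ∀ j ∈ S, ¬(i < j ∧ j < i + g)) with hSf
  -- Step A : the count equals the number of admissible legal index sets
  have stepA : ((Finset.Icc 1 (kent (2 * n + 1) - 1)).filter fun m =>
          i ∈ decomp m ∧ i + g ∈ decomp m ∧
            ∀ j ∈ decomp m, ¬(i < j ∧ j < i + g)).card = Sf.card := by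
    apply Finset.card_nbij' (i := fun x => decomp x) (j := fun S => ∑ y ∈ S, kent y)
    · intro x hx
      rw [Finset.mem_coe, Finset.mem_filter] at hx
      obtain ⟨hxI, hdi, hdig, hbet⟩ := hx
      rw [Finset.mem_Icc] at hxI
      obtain ⟨hleg, hsum⟩ := decomp_spec hdi
      rw [Finset.mem_coe, hSf, Finset.mem_filter, Finset.mem_powerset]
      refine ⟨?_, hleg, hdi, hdig, hbet⟩
      intro y hy
      rw [Finset.mem_Icc]
      refine ⟨hleg.1 y hy, ?_⟩
      by_contra hy2
      have h1 : kent (2 * n + 1) ≤ kent y := kent_mono (by omega)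
      have h2 : kent y ≤ ∑ z ∈ decomp x, kent z :=
        Finset.single_le_sum (fun z _ => Nat.zero_le _) hy
      omega
    · intro S hS
      rw [Finset.mem_coe, hSf, Finset.mem_filter, Finset.mem_powerset] at hS
      obtain ⟨hsub, hleg, hiS, higS, hbet⟩ := hS
      have hd : decomp (∑ y ∈ S, kent y) = S := decomp_eq hleg rfl
      rw [Finset.mem_coe, Finset.mem_filter, Finset.mem_Icc, hd]
      have h1 : 1 ≤ kent i := kent_pos (by omega)
      have h2 : kent i ≤ ∑ y ∈ S, kent y :=
        Finset.single_le_sum (fun z _ => Nat.zero_le _) hiS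
      have h3 : ∑ y ∈ S, kent y < kent (2 * n + 1) :=
        sum_lt_kent (2 * n) S hleg (fun z hz => (Finset.mem_Icc.1 (hsub hz)).2)
      beta_reduce
      exact ⟨⟨by omega, by omega⟩, hiS, higS, hbet⟩
    · intro x hx
      rw [Finset.mem_coe, Finset.mem_filter] at hx
      exact (decomp_spec hx.2.1).2
    · intro S hS
      rw [Finset.mem_coe, hSf, Finset.mem_filter] at hS
      exact decomp_eq hS.2.1 rfl
  -- decomposition of admissible sets
  have keyS : ∀ S ∈ Sf, ∀ x ∈ S,
      x = i ∨ x = i + g ∨ (1 ≤ x ∧ x ≤ i - 4) ∨ (i + g + 3 ≤ x ∧ x ≤ 2 * n) := by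
    intro S hS x hx
    rw [hSf, Finset.mem_filter, Finset.mem_powerset] at hS
    obtain ⟨hsub, hleg, hiS, higS, hbet⟩ := hS
    by_cases hxi : x = i
    · exact Or.inl hxi
    by_cases hxig : x = i + g
    · exact Or.inr (Or.inl hxig)
    have h1 := (KLegal_iff S).1 hleg |>.2 x hx i hiS hxi
    have h2 := (KLegal_iff S).1 hleg |>.2 x hx (i + g) higS hxig
    have h3 := hbet x hx
    have h4 := Finset.mem_Icc.1 (hsub hx)
    right; right
    omega
  -- Step B : product structure
  have stepB : Sf.card = P1.card * P2.card := by
    rw [← Finset.card_product]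
    apply Finset.card_nbij' (i := fun S => (S ∩ I1, S ∩ I2))
      (j := fun p => insert i (insert (i + g) (p.1 ∪ p.2)))
    · intro S hS
      rw [Finset.mem_coe, Finset.mem_product]
      constructor
      · rw [hP1, Finset.mem_filter, Finset.mem_powerset]
        exact ⟨Finset.inter_subset_right, KLegal.mono Finset.inter_subset_left
          ((Finset.mem_filter.1 hS).2.1)⟩
      · rw [hP2, Finset.mem_filter, Finset.mem_powerset]
        exact ⟨Finset.inter_subset_right, KLegal.mono Finset.inter_subset_left
          ((Finset.mem_filter.1 hS).2.1)⟩
    · rintro ⟨T, U⟩ hp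
      rw [Finset.mem_coe, Finset.mem_product] at hp
      obtain ⟨hpT, hpU⟩ := hp
      rw [hP1, Finset.mem_filter, Finset.mem_powerset] at hpT
      rw [hP2, Finset.mem_filter, Finset.mem_powerset] at hpU
      obtain ⟨hTsub, hTleg⟩ := hpT
      obtain ⟨hUsub, hUleg⟩ := hpU
      have hTb : ∀ x ∈ T, 1 ≤ x ∧ x ≤ i - 4 := by
        intro x hx; exact Finset.mem_Icc.1 (hTsub hx)
      have hUb : ∀ x ∈ U, i + g + 3 ≤ x ∧ x ≤ 2 * n := by
        intro x hx; exact Finset.mem_Icc.1 (hUsub hx)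
      rw [Finset.mem_coe, hSf, Finset.mem_filter, Finset.mem_powerset]
      refine ⟨?_, ?_, ?_, ?_, ?_⟩
      · intro x hx
        simp only [Finset.mem_insert, Finset.mem_union] at hx
        rw [Finset.mem_Icc]
        rcases hx with rfl | rfl | hx | hx
        · omega
        · omega
        · have := hTb x hx; omega
        · have := hUb x hx; omega
      · have := legal_glue a b ha1 hb2 T U hTleg hUleg
          (fun x hx => by have := hTb x hx; omega)
          (fun x hx => by have := hUb x hx; omega)
        rw [ha', hb']
        convert this using 3 <;> omega
      · exact Finset.mem_insert_self _ _
      · exact Finset.mem_insert_of_mem (Finset.mem_insert_self _ _)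
      · intro x hx
        simp only [Finset.mem_insert, Finset.mem_union] at hx
        rcases hx with rfl | rfl | hx | hx
        · omega
        · omega
        · have := hTb x hx; omega
        · have := hUb x hx; omega
    · intro S hS
      have hkey := keyS S hS
      rw [Finset.mem_coe, hSf, Finset.mem_filter] at hS
      obtain ⟨-, hleg, hiS, higS, -⟩ := hS
      ext x
      simp only [Finset.mem_insert, Finset.mem_union, Finset.mem_inter, hI1, hI2,
        Finset.mem_Icc]
      constructor
      · rintro (rfl | rfl | ⟨hx, -⟩ | ⟨hx, -⟩)
        · exact hiS
        · exact higS
        · exact hx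
        · exact hx
      · intro hx
        rcases hkey x hx with rfl | rfl | h | h
        · exact Or.inl rfl
        · exact Or.inr (Or.inl rfl)
        · exact Or.inr (Or.inr (Or.inl ⟨hx, h⟩))
        · exact Or.inr (Or.inr (Or.inr ⟨hx, h⟩))
    · rintro ⟨T, U⟩ hp
      rw [Finset.mem_coe, Finset.mem_product] at hp
      obtain ⟨hpT, hpU⟩ := hp
      rw [hP1, Finset.mem_filter, Finset.mem_powerset] at hpT
      rw [hP2, Finset.mem_filter, Finset.mem_powerset] at hpU
      have hTb : ∀ x ∈ T, 1 ≤ x ∧ x ≤ i - 4 := by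
        intro x hx; exact Finset.mem_Icc.1 (hpT.1 hx)
      have hUb : ∀ x ∈ U, i + g + 3 ≤ x ∧ x ≤ 2 * n := by
        intro x hx; exact Finset.mem_Icc.1 (hpU.1 hx)
      have e1 : insert i (insert (i + g) (T ∪ U)) ∩ I1 = T := by
        ext x
        simp only [Finset.mem_inter, Finset.mem_insert, Finset.mem_union, hI1,
          Finset.mem_Icc]
        constructor
        · rintro ⟨rfl | rfl | hx | hx, hb⟩
          · omega
          · omega
          · exact hx
          · have := hUb x hx; omega
        · intro hx
          have := hTb x hx
          exact ⟨Or.inr (Or.inr (Or.inl hx)), by omega⟩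
      have e2 : insert i (insert (i + g) (T ∪ U)) ∩ I2 = U := by
        ext x
        simp only [Finset.mem_inter, Finset.mem_insert, Finset.mem_union, hI2,
          Finset.mem_Icc]
        constructor
        · rintro ⟨rfl | rfl | hx | hx, hb⟩
          · omega
          · omega
          · have := hTb x hx; omega
          · exact hx
        · intro hx
          have := hUb x hx
          exact ⟨Or.inr (Or.inr (Or.inr hx)), by omega⟩
      simp only [e1, e2]
  -- Step C : compute the two factors
  have hP1card : P1.card = jac (a - 2) := by
    rw [hP1, hI1]
    have e : Finset.Icc 1 (i - 4) = Finset.Icc (2*0+1) (2*0+2*(a-2)) := by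
      ext x; rw [Finset.mem_Icc, Finset.mem_Icc]; omega
    rw [e, legal_count]
  have hP2card : P2.card = jac (k - 1) := by
    rw [hP2, hI2]
    have e : Finset.Icc (i + g + 3) (2 * n)
        = Finset.Icc (2*(a+b+1)+1) (2*(a+b+1)+2*(k-1)) := by
      ext x; rw [Finset.mem_Icc, Finset.mem_Icc]; omega
    rw [e, legal_count]
  rw [stepA, stepB, hP1card, hP2card]
  -- Step D : numerical identity
  have ei : i / 2 = a := by omega
  have ei2 : (i - 2) / 2 = a - 1 := by omega
  have ek : (2 * n - i - g) / 2 = k := by omega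
  rw [ei, ei2, ek]
  clear_value k
  clear hkdef hk' hP2card ek
  rcases Nat.lt_or_ge a 2 with ha2 | ha2
  · have haa : a = 1 := by omega
    subst haa
    rcases Nat.eq_zero_or_pos k with hk0 | hk1
    · subst hk0
      norm_num [jac]
    · obtain ⟨k', rfl⟩ : ∃ k', k = k' + 1 := ⟨k - 1, by omega⟩
      rw [show k' + 1 - 1 = k' by omega, show jac 0 = 1 from rfl]
      push_cast
      rw [jacQ k', show k' + 1 + 1 = k' + 2 by omega]
      field_simp
      ring
  · obtain ⟨a', rfl⟩ : ∃ a', a = a' + 2 := ⟨a - 2, by omega⟩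
    rcases Nat.eq_zero_or_pos k with hk0 | hk1
    · subst hk0
      rw [show (0:ℕ) - 1 = 0 by omega, show jac 0 = 1 from rfl]
      push_cast
      rw [jacQ a']
      field_simp
      ring
    · obtain ⟨k', rfl⟩ : ∃ k', k = k' + 1 := ⟨k - 1, by omega⟩
      rw [show k' + 1 - 1 = k' by omega]
      push_cast
      rw [jacQ a', jacQ k', show k' + 1 + 1 = k' + 2 by omega]
      field_simp
      ring_nf
      try exact Or.inl trivial
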